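/- Let G be a finite simple graph, let M be the output matching of a 1-2-MinGreedy execution on G, and let M* be a maximum matching of G in normal form with respect to M. Let X be an M-augmenting path of (V, M ∪ M*) with creation step i (selected vertex u_i, matched with v_i), and suppose a degree-1 endpoint exists after creation of X, i.e. some transfer with source u_i or v_i targets an endpoint w with degree exactly 1 in G_i. Then the execution has a step i+1, and the vertex u_{i+1} selected at step i+1 is either an M*-neighbor of u_i or v_i (and then u_{i+1} belongs to X), or is joined to u_i or v_i by an edge of F (and then u_{i+1} belongs to a connected component of (V, M ∪ M*) different from X). -/
import Mathlib


namespace MinGreedy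

noncomputable section

open SimpleGraph

/-- The degree of a vertex `x` in the graph `H`. -/
def deg {V : Type} (H : SimpleGraph V) (x : V) : ℕ :=
  (H.neighborSet x).ncard

/-- `M` is a matching of `G`, given as a set of pairwise disjoint edges of `G`. -/
def IsMatchingSet {V : Type} (G : SimpleGraph V) (M : Set (Sym2 V)) : Prop :=
  M ⊆ G.edgeSet ∧ ∀ e ∈ M, ∀ f ∈ M, e ≠ f → ∀ x : V, x ∈ e → x ∉ f

/-- `M` is a maximum matching of `G`. -/
def IsMaxMatchingSet {V : Type} (G : SimpleGraph V) (M : Set (Sym2 V)) : Prop :=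
  IsMatchingSet G M ∧ ∀ N : Set (Sym2 V), IsMatchingSet G N → N.ncard ≤ M.ncard

/-- `ν G`, the maximum size of a matching of `G`. -/
def nu {V : Type} (G : SimpleGraph V) : ℕ :=
  sSup {n | ∃ M : Set (Sym2 V), IsMatchingSet G M ∧ M.ncard = n}

/-- `G` has maximum degree at most `Δ`. -/
def maxDegLE {V : Type} (G : SimpleGraph V) (Δ : ℕ) : Prop :=
  ∀ x : V, deg G x ≤ Δ

/-- An execution of a greedy matching algorithm on `G`: in step `i` (`0 ≤ i < k`) the
edge `{sel i, oth i}` of `Gs i` is picked with selected vertex `sel i`, and `Gs (i+1)`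
is obtained from `Gs i` by deleting all edges incident with `sel i` or `oth i`;
at the end `Gs k` has no edges. -/
structure GreedyExec (V : Type) (G : SimpleGraph V) where
  k : ℕ
  Gs : ℕ → SimpleGraph V
  sel : ℕ → V
  oth : ℕ → V
  init : Gs 0 = G
  adj : ∀ i < k, (Gs i).Adj (sel i) (oth i)
  step : ∀ i < k, Gs (i + 1) =
    SimpleGraph.fromEdgeSet {e | e ∈ (Gs i).edgeSet ∧ sel i ∉ e ∧ oth i ∉ e}
  final : (Gs k).edgeSet = ∅

/-- The output matching `M = {e_1, …, e_k}` of an execution. -/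
def GreedyExec.M {V : Type} {G : SimpleGraph V} (E : GreedyExec V G) : Set (Sym2 V) :=
  {e | ∃ i < E.k, e = s(E.sel i, E.oth i)}

/-- The execution is a MinGreedy execution: in each step the selected vertex has
minimum positive degree in the current graph. -/
def GreedyExec.IsMinGreedy {V : Type} {G : SimpleGraph V} (E : GreedyExec V G) : Prop :=
  ∀ i < E.k, ∀ x : V, 0 < deg (E.Gs i) x → deg (E.Gs i) (E.sel i) ≤ deg (E.Gs i) x

/-- The execution is a 1-2-MinGreedy execution: whenever the current graph has a vertex of
degree 1 or 2, the selected vertex has minimum positive degree in the current graph. -/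
def GreedyExec.Is12MinGreedy {V : Type} {G : SimpleGraph V} (E : GreedyExec V G) : Prop :=
  ∀ i < E.k, (∃ x : V, deg (E.Gs i) x = 1 ∨ deg (E.Gs i) x = 2) →
    ∀ x : V, 0 < deg (E.Gs i) x → deg (E.Gs i) (E.sel i) ≤ deg (E.Gs i) x

/-- `p 0, p 1, …, p (2m+1)` is an `M`-augmenting path: an `M`-alternating path whose
first and last edges lie in `Mopt` and whose two endpoints `p 0` and `p (2m+1)` are
not covered by `M`; it has `m` edges of `M` and `m+1` edges of `Mopt`. -/
def IsAugPath {V : Type} (M Mopt : Set (Sym2 V)) (m : ℕ) (p : ℕ → V) : Prop :=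
  (∀ i ≤ 2 * m + 1, ∀ j ≤ 2 * m + 1, p i = p j → i = j) ∧
  (∀ j ≤ 2 * m, (j % 2 = 0 → s(p j, p (j + 1)) ∈ Mopt) ∧
                (j % 2 = 1 → s(p j, p (j + 1)) ∈ M)) ∧
  (∀ e ∈ M, p 0 ∉ e ∧ p (2 * m + 1) ∉ e)

/-- The vertex set of the path `p 0, …, p (2m+1)`. -/
def pathSupp {V : Type} (m : ℕ) (p : ℕ → V) : Set V := p '' {j | j ≤ 2 * m + 1}

/-- `w` is an endpoint of an `M`-augmenting path of the graph `(V, M ∪ Mopt)`. -/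
def IsPathEndpoint {V : Type} (M Mopt : Set (Sym2 V)) (w : V) : Prop :=
  ∃ m p, IsAugPath M Mopt m p ∧ (w = p 0 ∨ w = p (2 * m + 1))

/-- `S` is the vertex set of a singleton component: a single edge of `M ∩ Mopt`. -/
def IsSingletonComp {V : Type} (M Mopt : Set (Sym2 V)) (S : Set V) : Prop :=
  ∃ x y : V, x ≠ y ∧ s(x, y) ∈ M ∧ s(x, y) ∈ Mopt ∧ S = ({x, y} : Set V)

/-- `Mopt` is a maximum matching of `G` in normal form with respect to `M`: every
(nontrivial) connected component of the graph `(V, M ∪ Mopt)` is a singleton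
(a single edge of `M ∩ Mopt`) or an `M`-augmenting path. -/
def NormalForm {V : Type} (G : SimpleGraph V) (M Mopt : Set (Sym2 V)) : Prop :=
  IsMaxMatchingSet G Mopt ∧
  ∀ C : (SimpleGraph.fromEdgeSet (M ∪ Mopt)).ConnectedComponent,
    2 ≤ C.supp.ncard →
    IsSingletonComp M Mopt C.supp ∨
    ∃ m p, IsAugPath M Mopt m p ∧ C.supp = pathSupp m p

/-- `{x, y}` is an edge of `F = E ∖ (M ∪ Mopt)`. -/
def FEdge {V : Type} (G : SimpleGraph V) (M Mopt : Set (Sym2 V)) (x y : V) : Prop :=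
  s(x, y) ∈ G.edgeSet ∧ s(x, y) ∉ M ∧ s(x, y) ∉ Mopt

/-- The number of `F`-edges incident with `x`. -/
def Fdeg {V : Type} (G : SimpleGraph V) (M Mopt : Set (Sym2 V)) (x : V) : ℕ :=
  {e : Sym2 V | e ∈ G.edgeSet ∧ e ∉ M ∧ e ∉ Mopt ∧ x ∈ e}.ncard

/-- `x` is matched at step `i` of the execution, i.e. `x ∈ e_i`. -/
def matchedAt {V : Type} {G : SimpleGraph V} (E : GreedyExec V G) (i : ℕ) (x : V) : Prop :=
  i < E.k ∧ (x = E.sel i ∨ x = E.oth i)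

/-- The `F`-edge `{v, w}` is a transfer from `v` to `w` arising at step `i`: `w` is an
endpoint of an `M`-augmenting path, `v` is matched at step `i` and the degree of `w`
in the graph after step `i` is at most 1. -/
def transferAt {V : Type} {G : SimpleGraph V} (E : GreedyExec V G)
    (M Mopt : Set (Sym2 V)) (i : ℕ) (v w : V) : Prop :=
  FEdge G M Mopt v w ∧ IsPathEndpoint M Mopt w ∧ matchedAt E i v ∧
  deg (E.Gs (i + 1)) w ≤ 1

/-- The edge `{v, w}` is a transfer from `v` to `w`. -/
def IsTransfer {V : Type} {G : SimpleGraph V} (E : GreedyExec V G)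
    (M Mopt : Set (Sym2 V)) (v w : V) : Prop :=
  ∃ i, transferAt E M Mopt i v w

/-- `(v, w)` is an uncanceled transfer arising at step `i`: it is a transfer arising at
step `i` and it is not the case that (`w` has degree exactly 1 before step `i` with its
unique incident edge being `{v, w}`, and `w` is the target of at least two uncanceled
transfers arising at steps before `i`). -/
def uncanceledAt {V : Type} {G : SimpleGraph V} (E : GreedyExec V G)
    (M Mopt : Set (Sym2 V)) (i : ℕ) : V → V → Prop :=
  Nat.strongRecOn (motive := fun _ => V → V → Prop) i (fun i ih v w =>
    transferAt E M Mopt i v w ∧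
    ¬(deg (E.Gs i) w = 1 ∧ (E.Gs i).Adj v w ∧
      ∃ (j₁ : ℕ) (h₁ : j₁ < i) (v₁ : V) (j₂ : ℕ) (h₂ : j₂ < i) (v₂ : V),
        ih j₁ h₁ v₁ w ∧ ih j₂ h₂ v₂ w ∧ (j₁, v₁) ≠ (j₂, v₂)))

/-- `(v, w)` is an uncanceled transfer. -/
def IsUncanceledTransfer {V : Type} {G : SimpleGraph V} (E : GreedyExec V G)
    (M Mopt : Set (Sym2 V)) (v w : V) : Prop :=
  ∃ i, uncanceledAt E M Mopt i v w

/-- `(v, w)` is a canceled transfer. -/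
def IsCanceledTransfer {V : Type} {G : SimpleGraph V} (E : GreedyExec V G)
    (M Mopt : Set (Sym2 V)) (v w : V) : Prop :=
  IsTransfer E M Mopt v w ∧ ¬IsUncanceledTransfer E M Mopt v w

/-- `d_X`: the number of transfers whose source lies in the vertex set `X`. -/
def debits {V : Type} {G : SimpleGraph V} (E : GreedyExec V G)
    (M Mopt : Set (Sym2 V)) (X : Set V) : ℕ :=
  {q : V × V | IsTransfer E M Mopt q.1 q.2 ∧ q.1 ∈ X}.ncard

/-- `c_X`: the number of transfers whose target lies in the vertex set `X`. -/
def credits {V : Type} {G : SimpleGraph V} (E : GreedyExec V G)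
    (M Mopt : Set (Sym2 V)) (X : Set V) : ℕ :=
  {q : V × V | IsTransfer E M Mopt q.1 q.2 ∧ q.2 ∈ X}.ncard

/-- `i` is the creation step of the component with vertex set `X`: the step in which the
first edge of `M` lying in `X` is picked. -/
def creationStep {V : Type} {G : SimpleGraph V} (E : GreedyExec V G)
    (X : Set V) (i : ℕ) : Prop :=
  i < E.k ∧ E.sel i ∈ X ∧ E.oth i ∈ X ∧ ∀ j < i, ¬(E.sel j ∈ X ∧ E.oth j ∈ X)

/-- A degree-1 endpoint exists after the creation step `i`: some transfer with source
`sel i` or `oth i` targets an endpoint `w` of degree exactly 1 after step `i`. -/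
def Deg1EndpointAfter {V : Type} {G : SimpleGraph V} (E : GreedyExec V G)
    (M Mopt : Set (Sym2 V)) (i : ℕ) : Prop :=
  ∃ v w : V, (v = E.sel i ∨ v = E.oth i) ∧ transferAt E M Mopt i v w ∧
    deg (E.Gs (i + 1)) w = 1
section Aux

variable {V : Type} [Fintype V]

lemma deg_pos_of_adj {H : SimpleGraph V} {x y : V} (h : H.Adj x y) : 0 < deg H x := by
  rw [deg]
  exact (Set.ncard_pos (Set.toFinite _)).mpr ⟨y, h⟩

lemma two_le_deg {H : SimpleGraph V} {x y₁ y₂ : V} (h1 : H.Adj x y₁) (h2 : H.Adj x y₂)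
    (hne : y₁ ≠ y₂) : 2 ≤ deg H x := by
  have hsub : ({y₁, y₂} : Set V) ⊆ H.neighborSet x := by
    rintro a (rfl | rfl)
    · exact h1
    · exact h2
  calc 2 = ({y₁, y₂} : Set V).ncard := (Set.ncard_pair hne).symm
    _ ≤ _ := Set.ncard_le_ncard hsub (Set.toFinite _)

variable {G : SimpleGraph V} (E : GreedyExec V G)

lemma edge_step {j : ℕ} (hj : j < E.k) (e : Sym2 V) :
    e ∈ (E.Gs (j + 1)).edgeSet ↔ e ∈ (E.Gs j).edgeSet ∧ E.sel j ∉ e ∧ E.oth j ∉ e := by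
  rw [E.step j hj, SimpleGraph.edgeSet_fromEdgeSet]
  constructor
  · rintro ⟨⟨h1, h2, h3⟩, -⟩; exact ⟨h1, h2, h3⟩
  · rintro ⟨h1, h2, h3⟩
    exact ⟨⟨h1, h2, h3⟩, (E.Gs j).not_isDiag_of_mem_edgeSet h1⟩

lemma edge_mono_aux : ∀ (d a : ℕ), a + d ≤ E.k →
    (E.Gs (a + d)).edgeSet ⊆ (E.Gs a).edgeSet := by
  intro d
  induction d with
  | zero => intro a _; exact subset_rfl
  | succ n ih =>
    intro a h e he
    have h1 : a + n < E.k := by omega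
    have : a + (n + 1) = (a + n) + 1 := by omega
    rw [this] at he
    exact ih a (le_of_lt h1) (((edge_step E h1 e).mp he).1)

lemma edge_mono {a b : ℕ} (hab : a ≤ b) (hbk : b ≤ E.k) :
    (E.Gs b).edgeSet ⊆ (E.Gs a).edgeSet := by
  obtain ⟨d, rfl⟩ := Nat.exists_eq_add_of_le hab
  exact edge_mono_aux E d a hbk

lemma no_adj_after {j : ℕ} (hj : j < E.k) {x : V} (hx : x = E.sel j ∨ x = E.oth j)
    {a : ℕ} (hja : j < a) (hak : a ≤ E.k) (y : V) : ¬ (E.Gs a).Adj x y := by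
  intro hadj
  have he : s(x, y) ∈ (E.Gs a).edgeSet := hadj
  have he1 : s(x, y) ∈ (E.Gs (j + 1)).edgeSet := edge_mono E hja hak he
  have h2 := (edge_step E hj _).mp he1
  rcases hx with rfl | rfl
  · exact h2.2.1 (Sym2.mem_mk_left _ y)
  · exact h2.2.2 (Sym2.mem_mk_left _ y)

lemma step_eq_of_mem {j j' : ℕ} (hj : j < E.k) (hj' : j' < E.k) {x : V}
    (hx : x = E.sel j ∨ x = E.oth j) (hx' : x = E.sel j' ∨ x = E.oth j') : j = j' := by
  rcases lt_trichotomy j j' with h | h | h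
  · exfalso
    have hadj := E.adj j' hj'
    rcases hx' with heq | heq
    · exact no_adj_after E hj hx h (le_of_lt hj') _ (heq ▸ hadj)
    · exact no_adj_after E hj hx h (le_of_lt hj') _ (heq ▸ hadj.symm)
  · exact h
  · exfalso
    have hadj := E.adj j hj
    rcases hx with heq | heq
    · exact no_adj_after E hj' hx' h (le_of_lt hj) _ (heq ▸ hadj)
    · exact no_adj_after E hj' hx' h (le_of_lt hj) _ (heq ▸ hadj.symm)

lemma mem_M_eq {e : Sym2 V} (he : e ∈ E.M) {j : ℕ} (hj : j < E.k) {x : V}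
    (hx : x = E.sel j ∨ x = E.oth j) (hxe : x ∈ e) : e = s(E.sel j, E.oth j) := by
  obtain ⟨j', hj', rfl⟩ := he
  have hx' : x = E.sel j' ∨ x = E.oth j' := Sym2.mem_iff.mp hxe
  rw [step_eq_of_mem E hj' hj hx' hx]

lemma edge_in_Gs {x y : V} (hG : G.Adj x y) :
    ∀ a ≤ E.k, (∀ j < a, x ≠ E.sel j ∧ x ≠ E.oth j ∧ y ≠ E.sel j ∧ y ≠ E.oth j) →
      s(x, y) ∈ (E.Gs a).edgeSet := by
  intro a
  induction a with
  | zero => intro _ _; rw [E.init]; exact hG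
  | succ n ih =>
    intro hak h
    have hnk : n < E.k := hak
    refine (edge_step E hnk _).mpr
      ⟨ih (le_of_lt hnk) (fun j hj => h j (by omega)), ?_, ?_⟩
    · intro hmem
      rcases Sym2.mem_iff.mp hmem with h1 | h1
      · exact (h n (Nat.lt_succ_self n)).1 h1.symm
      · exact (h n (Nat.lt_succ_self n)).2.2.1 h1.symm
    · intro hmem
      rcases Sym2.mem_iff.mp hmem with h1 | h1
      · exact (h n (Nat.lt_succ_self n)).2.1 h1.symm
      · exact (h n (Nat.lt_succ_self n)).2.2.2 h1.symm

lemma aug_mopt_cover {M Mopt : Set (Sym2 V)} {m : ℕ} {p : ℕ → V}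
    (hp : IsAugPath M Mopt m p) {s : ℕ} (hs : s ≤ 2 * m + 1) :
    ∃ t, t ≤ 2 * m + 1 ∧ s(p s, p t) ∈ Mopt ∧
      ((s % 2 = 0 ∧ t = s + 1) ∨ (s % 2 = 1 ∧ t + 1 = s)) := by
  by_cases hpar : s % 2 = 0
  · exact ⟨s + 1, by omega, (hp.2.1 s (by omega)).1 hpar, Or.inl ⟨hpar, rfl⟩⟩
  · have hpar1 : s % 2 = 1 := by omega
    have h2 := (hp.2.1 (s - 1) (by omega)).1 (by omega)
    have heq : s - 1 + 1 = s := by omega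
    rw [heq] at h2
    refine ⟨s - 1, by omega, ?_, Or.inr ⟨hpar1, by omega⟩⟩
    rw [Sym2.eq_swap]; exact h2

lemma aug_m_cover {M Mopt : Set (Sym2 V)} {m : ℕ} {p : ℕ → V}
    (hp : IsAugPath M Mopt m p) {s : ℕ} (h1 : 1 ≤ s) (h2 : s ≤ 2 * m) :
    ∃ t, t ≤ 2 * m + 1 ∧ s(p s, p t) ∈ M ∧
      ((s % 2 = 1 ∧ t = s + 1) ∨ (s % 2 = 0 ∧ t + 1 = s)) := by
  by_cases hpar : s % 2 = 1
  · exact ⟨s + 1, by omega, (hp.2.1 s h2).2 hpar, Or.inl ⟨hpar, rfl⟩⟩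
  · have hpar0 : s % 2 = 0 := by omega
    have hM := (hp.2.1 (s - 1) (by omega)).2 (by omega)
    have heq : s - 1 + 1 = s := by omega
    rw [heq] at hM
    refine ⟨s - 1, by omega, ?_, Or.inr ⟨hpar0, by omega⟩⟩
    rw [Sym2.eq_swap]; exact hM

lemma path_not_matched_before {Mopt : Set (Sym2 V)} {m : ℕ} {p : ℕ → V}
    (hp : IsAugPath E.M Mopt m p) {i : ℕ} (hc : creationStep E (pathSupp m p) i)
    {j : ℕ} (hj : j < i) {t : ℕ} (ht : t ≤ 2 * m + 1)
    (hmem : p t = E.sel j ∨ p t = E.oth j) : False := by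
  have hik : i < E.k := hc.1
  have hjk : j < E.k := lt_trans hj hik
  have heM : s(E.sel j, E.oth j) ∈ E.M := ⟨j, hjk, rfl⟩
  have hpte : p t ∈ s(E.sel j, E.oth j) := Sym2.mem_iff.mpr hmem
  by_cases hend : t = 0 ∨ t = 2 * m + 1
  · rcases hend with rfl | rfl
    · exact (hp.2.2 _ heM).1 hpte
    · exact (hp.2.2 _ heM).2 hpte
  · push_neg at hend
    obtain ⟨t', ht', htM, -⟩ := aug_m_cover (s := t) hp (by omega) (by omega)
    have heq := mem_M_eq E htM hjk hmem (Sym2.mem_mk_left _ _)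
    have hsel : E.sel j ∈ pathSupp m p ∧ E.oth j ∈ pathSupp m p := by
      rcases Sym2.eq_iff.mp heq with ⟨ha, hb⟩ | ⟨ha, hb⟩
      · exact ⟨⟨t, ht, ha⟩, ⟨t', ht', hb⟩⟩
      · exact ⟨⟨t', ht', hb⟩, ⟨t, ht, ha⟩⟩
    exact hc.2.2.2 j hj hsel

end Aux
/-- if a degree-1 endpoint exists after the creation step i of a path X,
then step i+1 exists and its selected vertex is either an M*-neighbor of u_i or v_i
(and belongs to X) or is joined to u_i or v_i by an F-edge (and belongs to a component
different from X). -/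
theorem next_selected_vertex {V : Type} [Fintype V] (G : SimpleGraph V)
    (E : GreedyExec V G) (h12 : E.Is12MinGreedy)
    (Mopt : Set (Sym2 V)) (hnf : NormalForm G E.M Mopt)
    (m : ℕ) (p : ℕ → V) (hp : IsAugPath E.M Mopt m p)
    (i : ℕ) (hc : creationStep E (pathSupp m p) i)
    (hd1 : Deg1EndpointAfter E E.M Mopt i) :
    i + 1 < E.k ∧
    (((s(E.sel (i + 1), E.sel i) ∈ Mopt ∨ s(E.sel (i + 1), E.oth i) ∈ Mopt) ∧
        E.sel (i + 1) ∈ pathSupp m p) ∨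
      ((FEdge G E.M Mopt (E.sel (i + 1)) (E.sel i) ∨
        FEdge G E.M Mopt (E.sel (i + 1)) (E.oth i)) ∧
        E.sel (i + 1) ∉ pathSupp m p)) := by
  obtain ⟨v, w, hv, htr, hw1⟩ := hd1
  have hik : i < E.k := hc.1
  have hi1k : i + 1 < E.k := by
    rcases Nat.lt_or_ge (i + 1) E.k with h | h
    · exact h
    · exfalso
      have hk : i + 1 = E.k := le_antisymm hik h
      have hpos : 0 < ((E.Gs (i + 1)).neighborSet w).ncard := by
        have : deg (E.Gs (i + 1)) w = 1 := hw1
        rw [deg] at this; omega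
      obtain ⟨y, hy⟩ := (Set.ncard_pos (Set.toFinite _)).mp hpos
      have hmem : s(w, y) ∈ (E.Gs (i + 1)).edgeSet := (SimpleGraph.mem_edgeSet _).mpr hy
      rw [hk, E.final] at hmem
      exact hmem
  refine ⟨hi1k, ?_⟩
  have hadj1 : (E.Gs (i + 1)).Adj (E.sel (i + 1)) (E.oth (i + 1)) := E.adj _ hi1k
  have hupos : 0 < deg (E.Gs (i + 1)) (E.sel (i + 1)) := deg_pos_of_adj hadj1
  have hdegu : deg (E.Gs (i + 1)) (E.sel (i + 1)) = 1 := by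
    have := h12 (i + 1) hi1k ⟨w, Or.inl hw1⟩ w (by omega)
    omega
  have huniq : ∀ y, (E.Gs (i + 1)).Adj (E.sel (i + 1)) y → y = E.oth (i + 1) := by
    intro y hy
    by_contra hne
    have := two_le_deg hy hadj1 hne
    omega
  have hunm : ∀ j ≤ i, ¬(E.sel (i + 1) = E.sel j ∨ E.sel (i + 1) = E.oth j) := by
    intro j hj h
    exact no_adj_after E (lt_of_le_of_lt hj hik) h (Nat.lt_succ_of_le hj)
      (le_of_lt hi1k) _ hadj1
  by_cases hu : E.sel (i + 1) ∈ pathSupp m p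
  · obtain ⟨s, hs, hps⟩ := hu
    left
    have heM : s(E.sel (i + 1), E.oth (i + 1)) ∈ E.M := ⟨i + 1, hi1k, rfl⟩
    have hs0 : s ≠ 0 := by
      rintro rfl
      exact (hp.2.2 _ heM).1 (by rw [hps]; exact Sym2.mem_mk_left _ _)
    have hs1 : s ≠ 2 * m + 1 := by
      rintro rfl
      exact (hp.2.2 _ heM).2 (by rw [hps]; exact Sym2.mem_mk_left _ _)
    obtain ⟨t, ht, hopt, hoptc⟩ := aug_mopt_cover (s := s) hp hs
    by_cases hti : p t = E.sel i ∨ p t = E.oth i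
    · constructor
      · rcases hti with h | h
        · left; rw [hps, h] at hopt; exact hopt
        · right; rw [hps, h] at hopt; exact hopt
      · exact ⟨s, hs, hps⟩
    · exfalso
      push_neg at hti
      have hGadj : G.Adj (p s) (p t) := (SimpleGraph.mem_edgeSet _).mp (hnf.1.1.1 hopt)
      have hedge : s(p s, p t) ∈ (E.Gs (i + 1)).edgeSet := by
        refine edge_in_Gs E hGadj (i + 1) hi1k.le ?_
        intro j hj
        have hji : j ≤ i := by omega
        have h1 := hunm j hji
        push_neg at h1
        rw [← hps] at h1
        refine ⟨h1.1, h1.2, ?_, ?_⟩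
        · intro h
          rcases Nat.lt_or_ge j i with hlt | hge
          · exact path_not_matched_before E hp hc hlt ht (Or.inl h)
          · have : j = i := by omega
            exact hti.1 (this ▸ h)
        · intro h
          rcases Nat.lt_or_ge j i with hlt | hge
          · exact path_not_matched_before E hp hc hlt ht (Or.inr h)
          · have : j = i := by omega
            exact hti.2 (this ▸ h)
      have hadjt : (E.Gs (i + 1)).Adj (E.sel (i + 1)) (p t) := by
        rw [← hps]; exact (SimpleGraph.mem_edgeSet _).mp hedge
      have hzt : p t = E.oth (i + 1) := huniq _ hadjt
      obtain ⟨s', hs', hsM, hsc⟩ := aug_m_cover (s := s) hp (by omega) (by omega)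
      have heq := mem_M_eq E hsM hi1k (Or.inl hps) (Sym2.mem_mk_left _ _)
      have hzs' : p s' = E.oth (i + 1) := by
        rcases Sym2.eq_iff.mp heq with ⟨h1, h2⟩ | ⟨h1, h2⟩
        · exact h2
        · exact absurd (by rw [← hps, h1]) hadj1.ne
      have hts' : t = s' := hp.1 t ht s' hs' (by rw [hzt, hzs'])
      rcases hoptc with ⟨h1, h2⟩ | ⟨h1, h2⟩ <;> rcases hsc with ⟨h3, h4⟩ | ⟨h3, h4⟩ <;> omega
  · right
    have hexc : ∃ c, (c = E.sel i ∨ c = E.oth i) ∧ (E.Gs i).Adj (E.sel (i + 1)) c := by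
      by_contra hno
      push_neg at hno
      have hnsel : ¬(E.Gs i).Adj (E.sel (i + 1)) (E.sel i) := hno _ (Or.inl rfl)
      have hnoth : ¬(E.Gs i).Adj (E.sel (i + 1)) (E.oth i) := hno _ (Or.inr rfl)
      have hsubn : (E.Gs i).neighborSet (E.sel (i + 1)) ⊆
          (E.Gs (i + 1)).neighborSet (E.sel (i + 1)) := by
        intro y hy
        have hady : (E.Gs i).Adj (E.sel (i + 1)) y := hy
        have hmem : s(E.sel (i + 1), y) ∈ (E.Gs (i + 1)).edgeSet := by
          refine (edge_step E hik _).mpr ⟨(SimpleGraph.mem_edgeSet _).mpr hady, ?_, ?_⟩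
          · intro hm
            rcases Sym2.mem_iff.mp hm with h1 | h1
            · exact hunm i le_rfl (Or.inl h1.symm)
            · exact hnsel (h1 ▸ hady)
          · intro hm
            rcases Sym2.mem_iff.mp hm with h1 | h1
            · exact hunm i le_rfl (Or.inr h1.symm)
            · exact hnoth (h1 ▸ hady)
        exact (SimpleGraph.mem_edgeSet _).mp hmem
      have hdud : deg (E.Gs i) (E.sel (i + 1)) ≤ 1 := by
        have hle : deg (E.Gs i) (E.sel (i + 1)) ≤ deg (E.Gs (i + 1)) (E.sel (i + 1)) :=
          Set.ncard_le_ncard hsubn (Set.toFinite _)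
        omega
      have hzin : (E.Gs i).Adj (E.sel (i + 1)) (E.oth (i + 1)) :=
        (SimpleGraph.mem_edgeSet _).mp
          (edge_mono E (Nat.le_succ i) hi1k.le ((SimpleGraph.mem_edgeSet _).mpr hadj1))
      have hd1' : deg (E.Gs i) (E.sel (i + 1)) = 1 :=
        le_antisymm hdud (deg_pos_of_adj hzin)
      have hdsel : deg (E.Gs i) (E.sel i) = 1 := by
        have h1 := h12 i hik ⟨_, Or.inl hd1'⟩ (E.sel (i + 1)) (by omega)
        have h2 := deg_pos_of_adj (E.adj i hik)
        omega
      obtain ⟨t₀, ht₀, hpt₀⟩ := hc.2.1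
      obtain ⟨t₁, ht₁, hopt, hoptc⟩ := aug_mopt_cover (s := t₀) hp ht₀
      have hGadj : G.Adj (p t₀) (p t₁) := (SimpleGraph.mem_edgeSet _).mp (hnf.1.1.1 hopt)
      have hedge : s(p t₀, p t₁) ∈ (E.Gs i).edgeSet := by
        refine edge_in_Gs E hGadj i hik.le ?_
        intro j hj
        refine ⟨?_, ?_, ?_, ?_⟩
        · intro h; exact path_not_matched_before E hp hc hj ht₀ (Or.inl h)
        · intro h; exact path_not_matched_before E hp hc hj ht₀ (Or.inr h)
        · intro h; exact path_not_matched_before E hp hc hj ht₁ (Or.inl h)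
        · intro h; exact path_not_matched_before E hp hc hj ht₁ (Or.inr h)
      have hadjt₁ : (E.Gs i).Adj (E.sel i) (p t₁) := by
        rw [← hpt₀]; exact (SimpleGraph.mem_edgeSet _).mp hedge
      have ht₁oth : p t₁ = E.oth i := by
        by_contra hne
        have := two_le_deg hadjt₁ (E.adj i hik) hne
        omega
      have heMi : s(E.sel i, E.oth i) ∈ E.M := ⟨i, hik, rfl⟩
      have ht₀0 : t₀ ≠ 0 := by
        rintro rfl
        exact (hp.2.2 _ heMi).1 (by rw [hpt₀]; exact Sym2.mem_mk_left _ _)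
      have ht₀1 : t₀ ≠ 2 * m + 1 := by
        rintro rfl
        exact (hp.2.2 _ heMi).2 (by rw [hpt₀]; exact Sym2.mem_mk_left _ _)
      obtain ⟨t₀', ht₀', htM, hMc⟩ := aug_m_cover (s := t₀) hp (by omega) (by omega)
      have heq := mem_M_eq E htM hik (Or.inl hpt₀) (Sym2.mem_mk_left _ _)
      have ht₀'oth : p t₀' = E.oth i := by
        rcases Sym2.eq_iff.mp heq with ⟨h1, h2⟩ | ⟨h1, h2⟩
        · exact h2
        · exact absurd (by rw [← hpt₀, h1]) (E.adj i hik).ne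
      have ht₁t₀' : t₁ = t₀' := hp.1 t₁ ht₁ t₀' ht₀' (by rw [ht₁oth, ht₀'oth])
      rcases hoptc with ⟨h1, h2⟩ | ⟨h1, h2⟩ <;> rcases hMc with ⟨h3, h4⟩ | ⟨h3, h4⟩ <;> omega
    obtain ⟨c, hcor, hadjc⟩ := hexc
    have hGadjc : G.Adj (E.sel (i + 1)) c := by
      have hmem : s(E.sel (i + 1), c) ∈ (E.Gs 0).edgeSet :=
        edge_mono E (Nat.zero_le i) hik.le ((SimpleGraph.mem_edgeSet _).mpr hadjc)
      rw [E.init] at hmem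
      exact (SimpleGraph.mem_edgeSet _).mp hmem
    have hnM : s(E.sel (i + 1), c) ∉ E.M := by
      intro hM
      obtain ⟨j, hj, hej⟩ := hM
      have humem : E.sel (i + 1) ∈ s(E.sel j, E.oth j) := by
        rw [← hej]; exact Sym2.mem_mk_left _ _
      have hcmem : c ∈ s(E.sel j, E.oth j) := by
        rw [← hej]; exact Sym2.mem_mk_right _ _
      rcases le_or_gt j i with hle | hgt
      · exact hunm j hle (Sym2.mem_iff.mp humem)
      · have := step_eq_of_mem E hik hj hcor (Sym2.mem_iff.mp hcmem)
        omega
    have hnMopt : s(E.sel (i + 1), c) ∉ Mopt := by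
      intro hMopt
      have hcX : c ∈ pathSupp m p := by
        rcases hcor with rfl | rfl
        · exact hc.2.1
        · exact hc.2.2.1
      obtain ⟨r, hr, hpr⟩ := hcX
      obtain ⟨r₁, hr₁, hropt, -⟩ := aug_mopt_cover (s := r) hp hr
      by_cases heq2 : s(E.sel (i + 1), c) = s(p r, p r₁)
      · rcases Sym2.eq_iff.mp heq2 with ⟨h1, h2⟩ | ⟨h1, h2⟩
        · exact hu ⟨r, hr, h1.symm⟩
        · exact hu ⟨r₁, hr₁, h1.symm⟩
      · exact hnf.1.1.2 _ hMopt _ hropt heq2 c (Sym2.mem_mk_right _ _)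
          (by rw [← hpr]; exact Sym2.mem_mk_left _ _)
    refine ⟨?_, hu⟩
    rcases hcor with rfl | rfl
    · exact Or.inl ⟨(SimpleGraph.mem_edgeSet _).mpr hGadjc, hnM, hnMopt⟩
    · exact Or.inr ⟨(SimpleGraph.mem_edgeSet _).mpr hGadjc, hnM, hnMopt⟩

end

end MinGreedy
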